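/- Let Θ be an inner function with values in L(E) such that ‖Θ(0)‖ < 1. Then the set D_* = {(1/z)(Θ(z) − Θ(0))x : x ∈ E} is a linear subspace of the model space K_Θ whose dimension equals the dimension of E. -/

import Mathlib

open MeasureTheory Complex ContinuousLinearMap
open scoped ComplexInnerProductSpace

noncomputable section

/-- The circle `𝕋`, realized as `ℝ / 2πℤ`; the point `t` corresponds to `e^{it}`. -/
abbrev Circle2pi : Type := AddCircle (2 * Real.pi)

instance : Fact (0 < 2 * Real.pi) := ⟨by positivity⟩

/-- Normalized Haar (arc-length) measure on the circle. -/
abbrev haarCircle2pi : Measure Circle2pi := AddCircle.haarAddCircle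

variable {E : Type} [NormedAddCommGroup E] [InnerProductSpace ℂ E] [FiniteDimensional ℂ E]

/-- `Θ`, given by its boundary-value function on the circle, is an inner function: it is
(a.e. strongly) measurable, its boundary values are a.e. unitary operators on `E`, and its
Fourier coefficients of negative index vanish (the latter says exactly that `Θ` is the
boundary-value function of a bounded analytic `L(E)`-valued function on the unit disc,
i.e. an element of `H^∞(L(E))`). -/
structure IsInner (Θ : Circle2pi → (E →L[ℂ] E)) : Prop where
  meas : AEStronglyMeasurable Θ haarCircle2pi
  unit : ∀ᵐ t ∂haarCircle2pi, Θ t ∈ unitary (E →L[ℂ] E)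
  anal : ∀ n : ℤ, n < 0 → fourierCoeff Θ n = 0

/-- Membership in the Hardy space `H²(E)`, viewed as the subspace of `L²(E)` of functions
whose Fourier coefficients of negative index vanish. -/
def MemH2 (f : Lp E 2 haarCircle2pi) : Prop :=
  ∀ n : ℤ, n < 0 → fourierCoeff (⇑f) n = 0

/-- Membership in the model space `K_Θ = H²(E) ⊖ Θ H²(E)`: `f` belongs to `H²(E)` and is
orthogonal to `Θ H²(E)`. -/
def MemK (Θ : Circle2pi → (E →L[ℂ] E)) (f : Lp E 2 haarCircle2pi) : Prop :=
  MemH2 f ∧ ∀ g : Lp E 2 haarCircle2pi, MemH2 g →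
    ∫ t, ⟪f t, Θ t (g t)⟫ ∂haarCircle2pi = 0

/-- The boundary values of `Θ̃(z) = Θ(z̄)*`, namely `Θ̃(e^{it}) = Θ(e^{-it})*`. -/
def tild (Θ : Circle2pi → (E →L[ℂ] E)) : Circle2pi → (E →L[ℂ] E) :=
  fun t => adjoint (Θ (-t))

/-- `τ` is the operator on `L²(E)` given by `(τ f)(e^{it}) = e^{-it} Θ(e^{-it})* f(e^{-it})`. -/
def IsTau (Θ : Circle2pi → (E →L[ℂ] E))
    (τ : Lp E 2 haarCircle2pi →L[ℂ] Lp E 2 haarCircle2pi) : Prop :=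
  ∀ f : Lp E 2 haarCircle2pi,
    (⇑(τ f)) =ᵐ[haarCircle2pi] fun t => fourier (-1) t • (adjoint (Θ (-t))) (f (-t))

/-- `P` is the orthogonal projection of `L²(E)` onto the model space `K_Θ`:
its range lies in `K_Θ`, it fixes `K_Θ`, and `f - P f` is orthogonal to `K_Θ`. -/
def IsProjK (Θ : Circle2pi → (E →L[ℂ] E))
    (P : Lp E 2 haarCircle2pi →L[ℂ] Lp E 2 haarCircle2pi) : Prop :=
  (∀ f, MemK Θ (P f)) ∧ (∀ f, MemK Θ f → P f = f) ∧
    ∀ f g, MemK Θ g → ⟪f - P f, g⟫ = 0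

/-- `S` acts on the model space `K_Θ` as the compressed shift `S_Θ f = P_Θ (z f)`:
for `f ∈ K_Θ`, `S f ∈ K_Θ` and `S f - z f` is orthogonal to `K_Θ`, i.e.
`⟪S f, g⟫ = ⟪z f, g⟫` for all `g ∈ K_Θ`. -/
def IsCompShift (Θ : Circle2pi → (E →L[ℂ] E))
    (S : Lp E 2 haarCircle2pi →L[ℂ] Lp E 2 haarCircle2pi) : Prop :=
  ∀ f, MemK Θ f → MemK Θ (S f) ∧
    ∀ g, MemK Θ g → ⟪S f, g⟫ = ∫ t, ⟪fourier 1 t • f t, g t⟫ ∂haarCircle2pi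

/-- `A` acts on the model space `K_Θ` as the adjoint `S_Θ*` of the compressed shift `S`:
for `f ∈ K_Θ`, `A f ∈ K_Θ` and `⟪A f, g⟫ = ⟪f, S g⟫` for all `g ∈ K_Θ`. -/
def IsCompShiftAdj (Θ : Circle2pi → (E →L[ℂ] E))
    (S A : Lp E 2 haarCircle2pi →L[ℂ] Lp E 2 haarCircle2pi) : Prop :=
  ∀ f, MemK Θ f → MemK Θ (A f) ∧ ∀ g, MemK Θ g → ⟪A f, g⟫ = ⟪f, S g⟫

/-- The subspace `D = {(I - Θ(z) Θ(0)*) x : x ∈ E}` of `K_Θ`, described through boundary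
values; here `Θ(0)` is the 0-th Fourier coefficient of `Θ`. -/
def DSet (Θ : Circle2pi → (E →L[ℂ] E)) : Set (Lp E 2 haarCircle2pi) :=
  {f | ∃ x : E, (⇑f) =ᵐ[haarCircle2pi]
    fun t => x - Θ t (adjoint (fourierCoeff Θ 0) x)}

/-- The subspace `D_* = {(1/z)(Θ(z) - Θ(0)) x : x ∈ E}` of `K_Θ`, described through
boundary values. -/
def DStarSet (Θ : Circle2pi → (E →L[ℂ] E)) : Set (Lp E 2 haarCircle2pi) :=
  {f | ∃ x : E, (⇑f) =ᵐ[haarCircle2pi]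
    fun t => fourier (-1) t • (Θ t x - fourierCoeff Θ 0 x)}

/-- `A` is a matrix-valued truncated Toeplitz operator on `K_Θ`, i.e. `A ∈ T_Θ`: there is a
symbol `Φ ∈ L²(L(E))` such that `A f = P_Θ (Φ f)` for every `f` in
`K_Θ^∞ = K_Θ ∩ H^∞(E)`; the compression is expressed by: `A f ∈ K_Θ` and
`⟪A f, g⟫ = ⟪Φ f, g⟫` for every `g ∈ K_Θ`. -/
def MemTT (Θ : Circle2pi → (E →L[ℂ] E))
    (A : Lp E 2 haarCircle2pi →L[ℂ] Lp E 2 haarCircle2pi) : Prop :=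
  ∃ Φ : Circle2pi → (E →L[ℂ] E), MemLp Φ 2 haarCircle2pi ∧
    ∀ f, MemK Θ f → MemLp (⇑f) ⊤ haarCircle2pi →
      MemK Θ (A f) ∧ ∀ g, MemK Θ g → ⟪A f, g⟫ = ∫ t, ⟪Φ t (f t), g t⟫ ∂haarCircle2pi

/-! For `x ∈ E` let `F_x(t) = e^{-it} (Θ(t) x - Θ̂(0) x)`. Since `Θ` has no negative
frequencies, neither has `F_x`, so `F_x ∈ H²(E)`. Pointwise
`Θ(t)* F_x(t) = e^{-it} (x - Θ(t)* Θ̂(0) x)` by unitarity, and this has only negative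
frequencies because `Θ*` has only nonpositive ones; by Parseval it is therefore orthogonal to
every `g ∈ H²(E)`, i.e. `F_x ⊥ Θ H²(E)`. So
`x ↦ F_x` is a linear map `E → K_Θ` with range `D_*`. It is injective when `‖Θ̂(0)‖ < 1`: if
`F_x = 0` then `Θ(t) x = Θ̂(0) x` for some `t` with `Θ(t)` unitary, whence
`‖x‖ ≤ ‖Θ̂(0)‖ ‖x‖` and `x = 0`. -/

theorem MeasureTheory.MemLp.integrable_inner {α 𝕜 H : Type*} [MeasurableSpace α] {μ : Measure α}
    [RCLike 𝕜] [NormedAddCommGroup H] [InnerProductSpace 𝕜 H] {u w : α → H}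
    (hu : MemLp u 2 μ) (hw : MemLp w 2 μ) : Integrable (fun t => inner 𝕜 (u t) (w t)) μ :=
  (L2.integrable_inner (hu.toLp u) (hw.toLp w)).congr <| by
    filter_upwards [hu.coeFn_toLp, hw.coeFn_toLp] with t hut hwt
    rw [hut, hwt]

section FourierCoeff

variable {T : ℝ} [Fact (0 < T)] {V W H K : Type*} [NormedAddCommGroup V] [NormedSpace ℂ V]
  [NormedAddCommGroup W] [NormedSpace ℂ W] [NormedAddCommGroup H] [InnerProductSpace ℂ H]
  [NormedAddCommGroup K] [InnerProductSpace ℂ K]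

theorem MeasureTheory.MemLp.fourier_smul {p : ENNReal} {f : AddCircle T → V}
    (hf : MemLp f p AddCircle.haarAddCircle) (n : ℤ) :
    MemLp (fun t => fourier n t • f t) p AddCircle.haarAddCircle :=
  hf.of_le ((map_continuous (fourier n)).aestronglyMeasurable.smul hf.1) <| .of_forall fun t => by
    rw [norm_smul, fourier_apply, Circle.norm_coe, one_mul]

theorem fourierCoeff_fourier_smul (m n : ℤ) (f : AddCircle T → V) :
    fourierCoeff (fun t => fourier m t • f t) n = fourierCoeff f (n - m) := by
  simp only [fourierCoeff, smul_smul, ← fourier_add]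
  rw [neg_sub, sub_eq_neg_add]

theorem fourierCoeff_const [CompleteSpace V] (v : V) (n : ℤ) :
    fourierCoeff (fun _ : AddCircle T => v) n = if n = 0 then v else 0 := by
  split_ifs with hn
  · simp [fourierCoeff, hn]
  · rw [fourierCoeff, integral_smul_const, integral_eq_zero_of_add_right_eq_neg
      (fourier_add_half_inv_index (neg_ne_zero.mpr hn) Fact.out), zero_smul]

theorem fourierCoeff_sub {f g : AddCircle T → V} (hf : Integrable f AddCircle.haarAddCircle)
    (hg : Integrable g AddCircle.haarAddCircle) (n : ℤ) :
    fourierCoeff (fun t => f t - g t) n = fourierCoeff f n - fourierCoeff g n := by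
  simpa [fourierCoeff, smul_sub, -fourier_apply] using
    integral_sub (hf.fourier_smul (-n)) (hg.fourier_smul (-n))

theorem ContinuousLinearMap.fourierCoeff_comp [CompleteSpace V] [CompleteSpace W]
    (L : V →L[ℂ] W) {f : AddCircle T → V} (hf : Integrable f AddCircle.haarAddCircle) (n : ℤ) :
    fourierCoeff (fun t => L (f t)) n = L (fourierCoeff f n) := by
  simp only [fourierCoeff, ← L.map_smul]
  exact L.integral_comp_comm (hf.fourier_smul _)

theorem fourierCoeff_adjoint [CompleteSpace H] [CompleteSpace K] {Θ : AddCircle T → H →L[ℂ] K}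
    (hΘ : Integrable Θ AddCircle.haarAddCircle) (n : ℤ) :
    fourierCoeff (fun t => adjoint (Θ t)) n = adjoint (fourierCoeff Θ (-n)) := by
  have h (t : AddCircle T) : fourier (-n) t • adjoint (Θ t) = adjoint (fourier n t • Θ t) := by
    rw [map_smulₛₗ, fourier_neg]
  simp only [fourierCoeff, h, neg_neg]
  exact integral_comp_commSL (by simp)
    (adjoint : (H →L[ℂ] K) ≃ₗᵢ⋆[ℂ] _).toContinuousLinearEquiv.toContinuousLinearMap
    (hΘ.fourier_smul n)

theorem integral_inner_eq_tsum_inner_fourierCoeff {u w : AddCircle T → ℂ}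
    (hu : MemLp u 2 AddCircle.haarAddCircle) (hw : MemLp w 2 AddCircle.haarAddCircle) :
    ∫ t, ⟪u t, w t⟫ ∂AddCircle.haarAddCircle = ∑' n, ⟪fourierCoeff u n, fourierCoeff w n⟫ := by
  calc ∫ t, ⟪u t, w t⟫ ∂AddCircle.haarAddCircle = ⟪hu.toLp u, hw.toLp w⟫ := by
        rw [L2.inner_def]
        refine integral_congr_ae ?_
        filter_upwards [hu.coeFn_toLp, hw.coeFn_toLp] with t hut hwt
        rw [hut, hwt]
    _ = ⟪fourierBasis.repr (hu.toLp u), fourierBasis.repr (hw.toLp w)⟫ :=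
        (fourierBasis.repr.inner_map_map _ _).symm
    _ = ∑' n, ⟪fourierCoeff u n, fourierCoeff w n⟫ := by
        simp only [lp.inner_eq_tsum, fourierBasis_repr, fourierCoeff_congr_ae hu.coeFn_toLp,
          fourierCoeff_congr_ae hw.coeFn_toLp]

theorem integral_inner_eq_zero_of_fourierCoeff [FiniteDimensional ℂ H] {u w : AddCircle T → H}
    (hu : MemLp u 2 AddCircle.haarAddCircle) (hw : MemLp w 2 AddCircle.haarAddCircle)
    (hu₀ : ∀ n, 0 ≤ n → fourierCoeff u n = 0) (hw₀ : ∀ n < 0, fourierCoeff w n = 0) :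
    ∫ t, ⟪u t, w t⟫ ∂AddCircle.haarAddCircle = 0 := by
  let b := stdOrthonormalBasis ℂ H
  have coord {f : AddCircle T → H} (hf : MemLp f 2 AddCircle.haarAddCircle) (v : H) (n : ℤ) :
      fourierCoeff (fun t => ⟪v, f t⟫) n = ⟪v, fourierCoeff f n⟫ :=
    (innerSL ℂ v).fourierCoeff_comp (hf.integrable one_le_two) n
  have expand (t : AddCircle T) : ⟪u t, w t⟫ = ∑ i, ⟪⟪b i, u t⟫, ⟪b i, w t⟫⟫ := by
    rw [← b.sum_inner_mul_inner]
    refine Finset.sum_congr rfl fun i _ => ?_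
    rw [RCLike.inner_apply, inner_conj_symm, mul_comm]
  simp_rw [expand]
  rw [integral_finsetSum _ fun i _ =>
    (hu.const_inner (b i)).integrable_inner (hw.const_inner (b i))]
  refine Finset.sum_eq_zero fun i _ => ?_
  rw [integral_inner_eq_tsum_inner_fourierCoeff (hu.const_inner (b i)) (hw.const_inner (b i))]
  refine (tsum_congr fun n => ?_).trans tsum_zero
  rw [coord hu, coord hw]
  rcases lt_or_ge n 0 with hn | hn
  · rw [hw₀ n hn, inner_zero_right, inner_zero_right]
  · rw [hu₀ n hn, inner_zero_right, inner_zero_left]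

end FourierCoeff

def dStarFun (Θ : Circle2pi → E →L[ℂ] E) (x : E) : Circle2pi → E :=
  fun t => fourier (-1) t • (Θ t x - fourierCoeff Θ 0 x)

namespace IsInner

variable {Θ : Circle2pi → E →L[ℂ] E}

theorem norm_apply (hΘ : IsInner Θ) : ∀ᵐ t ∂haarCircle2pi, ∀ y, ‖Θ t y‖ = ‖y‖ :=
  hΘ.unit.mono fun _ ht => norm_map_of_mem_unitary ht

theorem norm_le_one (hΘ : IsInner Θ) : ∀ᵐ t ∂haarCircle2pi, ‖Θ t‖ ≤ 1 :=
  hΘ.norm_apply.mono fun _ ht =>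
    opNorm_le_bound _ zero_le_one fun y => (ht y).trans_le (one_mul _).ge

theorem integrable (hΘ : IsInner Θ) : Integrable Θ haarCircle2pi :=
  .of_bound hΘ.meas 1 hΘ.norm_le_one

theorem integrable_adjoint (hΘ : IsInner Θ) :
    Integrable (fun t => adjoint (Θ t)) haarCircle2pi :=
  .of_bound (adjoint.continuous.comp_aestronglyMeasurable hΘ.meas) 1 <| by
    simpa only [LinearIsometryEquiv.norm_map] using hΘ.norm_le_one

theorem memLp_apply (hΘ : IsInner Θ) (x : E) : MemLp (fun t => Θ t x) 2 haarCircle2pi :=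
  .of_bound (hΘ.meas.apply_continuousLinearMap x) ‖x‖ <| hΘ.norm_apply.mono fun _ ht => (ht x).le

theorem memLp_adjoint_apply (hΘ : IsInner Θ) (x : E) :
    MemLp (fun t => adjoint (Θ t) x) 2 haarCircle2pi :=
  .of_bound (hΘ.integrable_adjoint.aestronglyMeasurable.apply_continuousLinearMap x) ‖x‖ <|
    hΘ.norm_le_one.mono fun t ht => by
      simpa using le_of_opNorm_le _ ((LinearIsometryEquiv.norm_map adjoint (Θ t)).trans_le ht) x

theorem fourierCoeff_apply (hΘ : IsInner Θ) (x : E) (n : ℤ) :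
    fourierCoeff (fun t => Θ t x) n = fourierCoeff Θ n x :=
  (apply ℂ E x).fourierCoeff_comp hΘ.integrable n

theorem fourierCoeff_adjoint_apply (hΘ : IsInner Θ) (x : E) (n : ℤ) :
    fourierCoeff (fun t => adjoint (Θ t) x) n = adjoint (fourierCoeff Θ (-n)) x := by
  rw [← fourierCoeff_adjoint hΘ.integrable]
  exact (apply ℂ E x).fourierCoeff_comp hΘ.integrable_adjoint n

theorem memLp_dStarFun (hΘ : IsInner Θ) (x : E) : MemLp (dStarFun Θ x) 2 haarCircle2pi :=
  ((hΘ.memLp_apply x).sub (memLp_const _)).fourier_smul (-1)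

theorem fourierCoeff_dStarFun_of_neg (hΘ : IsInner Θ) (x : E) {n : ℤ} (hn : n < 0) :
    fourierCoeff (dStarFun Θ x) n = 0 := by
  unfold dStarFun
  rw [fourierCoeff_fourier_smul, sub_neg_eq_add,
    fourierCoeff_sub ((hΘ.memLp_apply x).integrable one_le_two) (integrable_const _),
    hΘ.fourierCoeff_apply, fourierCoeff_const]
  obtain hn' | hn' := eq_or_ne (n + 1) 0
  · rw [if_pos hn', hn', sub_self]
  · rw [if_neg hn', hΘ.anal _ (by omega), zero_apply, sub_zero]

theorem integral_inner_dStarFun_apply_eq_zero (hΘ : IsInner Θ) (x : E)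
    {g : Lp E 2 haarCircle2pi} (hg : MemH2 g) :
    ∫ t, ⟪dStarFun Θ x t, Θ t (g t)⟫ ∂haarCircle2pi = 0 := by
  set c := fourierCoeff Θ 0 x
  let q t := fourier (-1) t • (x - adjoint (Θ t) c)
  have hq : ∀ᵐ t ∂haarCircle2pi, ⟪dStarFun Θ x t, Θ t (g t)⟫ = ⟪q t, g t⟫ := by
    filter_upwards [hΘ.unit] with t ht
    have hx : adjoint (Θ t) (Θ t x) = x := by
      simpa [star_eq_adjoint] using congr($(Unitary.star_mul_self_of_mem ht) x)
    rw [← adjoint_inner_left, dStarFun, map_smul, map_sub, hx]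
  have hq₀ (n : ℤ) (hn : 0 ≤ n) : fourierCoeff q n = 0 := by
    rw [fourierCoeff_fourier_smul, sub_neg_eq_add,
      fourierCoeff_sub (integrable_const _) ((hΘ.memLp_adjoint_apply c).integrable one_le_two),
      fourierCoeff_const, if_neg (by omega), hΘ.fourierCoeff_adjoint_apply,
      hΘ.anal _ (by omega), map_zero, zero_apply, sub_zero]
  rw [integral_congr_ae hq]
  exact integral_inner_eq_zero_of_fourierCoeff
    (((memLp_const x).sub (hΘ.memLp_adjoint_apply c)).fourier_smul (-1)) (Lp.memLp g) hq₀ hg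

theorem memK_of_ae_eq_dStarFun (hΘ : IsInner Θ) {x : E} {f : Lp E 2 haarCircle2pi}
    (hf : f =ᵐ[haarCircle2pi] dStarFun Θ x) : MemK Θ f := by
  refine ⟨fun n hn => ?_, fun g hg => ?_⟩
  · rw [fourierCoeff_congr_ae hf, hΘ.fourierCoeff_dStarFun_of_neg x hn]
  · rw [← hΘ.integral_inner_dStarFun_apply_eq_zero x hg]
    refine integral_congr_ae ?_
    filter_upwards [hf] with t ht
    rw [ht]

theorem eq_zero_of_dStarFun_ae_eq_zero (hΘ : IsInner Θ) (hΘ0 : ‖fourierCoeff Θ 0‖ < 1) {x : E}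
    (hx : dStarFun Θ x =ᵐ[haarCircle2pi] 0) : x = 0 := by
  obtain ⟨t, hxt, ht⟩ := (hx.and hΘ.norm_apply).exists
  have hΘt : Θ t x = fourierCoeff Θ 0 x :=
    sub_eq_zero.mp ((smul_eq_zero.mp hxt).resolve_left (Circle.coe_ne_zero _))
  have hle : ‖x‖ ≤ ‖fourierCoeff Θ 0‖ * ‖x‖ := by
    calc ‖x‖ = ‖fourierCoeff Θ 0 x‖ := by rw [← hΘt, ht]
      _ ≤ ‖fourierCoeff Θ 0‖ * ‖x‖ := le_opNorm _ x
  exact norm_le_zero_iff.mp <| by nlinarith [norm_nonneg x]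

def dStarMap (hΘ : IsInner Θ) : E →ₗ[ℂ] Lp E 2 haarCircle2pi where
  toFun x := (hΘ.memLp_dStarFun x).toLp
  map_add' x y := by
    rw [← MemLp.toLp_add]
    refine MemLp.toLp_congr _ _ (.of_forall fun t => ?_)
    simp only [dStarFun, Pi.add_apply, map_add, add_sub_add_comm, smul_add]
  map_smul' a x := by
    rw [RingHom.id_apply, ← MemLp.toLp_const_smul]
    refine MemLp.toLp_congr _ _ (.of_forall fun t => ?_)
    simp only [dStarFun, Pi.smul_apply, map_smul, ← smul_sub, smul_comm a]

theorem dStarMap_ae_eq (hΘ : IsInner Θ) (x : E) : hΘ.dStarMap x =ᵐ[haarCircle2pi] dStarFun Θ x :=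
  (hΘ.memLp_dStarFun x).coeFn_toLp

theorem dStarMap_injective (hΘ : IsInner Θ) (hΘ0 : ‖fourierCoeff Θ 0‖ < 1) :
    Function.Injective hΘ.dStarMap :=
  (injective_iff_map_eq_zero _).mpr fun x hx => hΘ.eq_zero_of_dStarFun_ae_eq_zero hΘ0 <|
    (hΘ.dStarMap_ae_eq x).symm.trans (by rw [hx]; exact Lp.coeFn_zero _ _ _)

theorem coe_range_dStarMap (hΘ : IsInner Θ) :
    (LinearMap.range hΘ.dStarMap : Set (Lp E 2 haarCircle2pi)) = DStarSet Θ := by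
  ext f
  constructor
  · rintro ⟨x, rfl⟩
    exact ⟨x, hΘ.dStarMap_ae_eq x⟩
  · rintro ⟨x, hx⟩
    exact ⟨x, Lp.ext ((hΘ.dStarMap_ae_eq x).trans hx.symm)⟩

end IsInner

/-- If `Θ` is inner with `‖Θ(0)‖ < 1`, then
`D_* = {(1/z)(Θ(z) - Θ(0)) x : x ∈ E}` is a linear subspace of the model space `K_Θ`
whose dimension equals the dimension of `E`. -/
theorem DStarSet_subspace_of_model_space (Θ : Circle2pi → (E →L[ℂ] E)) (hΘ : IsInner Θ)
    (hΘ0 : ‖fourierCoeff Θ 0‖ < 1) :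
    ∃ V : Submodule ℂ (Lp E 2 haarCircle2pi),
      (V : Set (Lp E 2 haarCircle2pi)) = DStarSet Θ ∧
      (∀ f ∈ V, MemK Θ f) ∧
      Module.finrank ℂ V = Module.finrank ℂ E := by
  refine ⟨LinearMap.range hΘ.dStarMap, hΘ.coe_range_dStarMap, ?_,
    LinearMap.finrank_range_of_inj (hΘ.dStarMap_injective hΘ0)⟩
  rintro _ ⟨x, rfl⟩
  exact hΘ.memK_of_ae_eq_dStarFun (hΘ.dStarMap_ae_eq x)
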